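/- Let α∈ℝ, α≠0, let f:ℝ→ℝ be smooth, and let V(q₁,q₂)=q₁^{4/α} f(q₂/q₁) on the open set {q₁>0}⊂ℝ⁴. Then the bivector P'' = α·H·P + P̃ satisfies the Jacobi identity on {q₁>0}: for all indices i,j,k, Σ_l ( P''^{li} ∂P''^{jk}/∂x^l + P''^{lj} ∂P''^{ki}/∂x^l + P''^{lk} ∂P''^{ij}/∂x^l ) = 0. -/

import Mathlib

open Real

noncomputable section

/-- Partial derivative of `F` in the `k`-th coordinate direction at `x`. -/
def pd (F : (Fin 4 → ℝ) → ℝ) (k : Fin 4) (x : Fin 4 → ℝ) : ℝ :=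
  fderiv ℝ F x (Pi.single k 1)

/-- The canonical Poisson bivector on ℝ⁴. -/
def Pcan : Matrix (Fin 4) (Fin 4) ℝ :=
  !![0, 0, 1, 0; 0, 0, 0, 1; -1, 0, 0, 0; 0, -1, 0, 0]

/-- Lie derivative of a bivector field `T` along a vector field `Xf`:
`(L_X T)^{ij} = Σ_k ( X^k ∂T^{ij}/∂x^k − T^{kj} ∂X^i/∂x^k − T^{ik} ∂X^j/∂x^k )`. -/
def lieDerivBiv (Xf : (Fin 4 → ℝ) → Fin 4 → ℝ)
    (T : (Fin 4 → ℝ) → Matrix (Fin 4) (Fin 4) ℝ)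
    (i j : Fin 4) (x : Fin 4 → ℝ) : ℝ :=
  ∑ k, (Xf x k * pd (fun y => T y i j) k x
      - T x k j * pd (fun y => Xf y i) k x
      - T x i k * pd (fun y => Xf y j) k x)

/-- Lie derivative of a 2-form `ω` along a vector field `Xf`:
`(L_X ω)_{ij} = Σ_k ( X^k ∂ω_{ij}/∂x^k + ω_{kj} ∂X^k/∂x^i + ω_{ik} ∂X^k/∂x^j )`. -/
def lieDerivForm (Xf : (Fin 4 → ℝ) → Fin 4 → ℝ)
    (ω : (Fin 4 → ℝ) → Matrix (Fin 4) (Fin 4) ℝ)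
    (i j : Fin 4) (x : Fin 4 → ℝ) : ℝ :=
  ∑ k, (Xf x k * pd (fun y => ω y i j) k x
      + ω x k j * pd (fun y => Xf y k) i x
      + ω x i k * pd (fun y => Xf y k) j x)

/-- The Jacobiator of a bivector field `A`; `A` satisfies the Jacobi identity iff it
vanishes for all indices `i j k`. -/
def jac (A : (Fin 4 → ℝ) → Matrix (Fin 4) (Fin 4) ℝ)
    (i j k : Fin 4) (x : Fin 4 → ℝ) : ℝ :=
  ∑ l, (A x l i * pd (fun y => A y j k) l x
      + A x l j * pd (fun y => A y k i) l x
      + A x l k * pd (fun y => A y i j) l x)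

/-- The mixed Schouten bracket expression of two bivector fields `A` and `B`. -/
def mixedSchouten (A B : (Fin 4 → ℝ) → Matrix (Fin 4) (Fin 4) ℝ)
    (i j k : Fin 4) (x : Fin 4 → ℝ) : ℝ :=
  ∑ l, (A x l i * pd (fun y => B y j k) l x
      + A x l j * pd (fun y => B y k i) l x
      + A x l k * pd (fun y => B y i j) l x
      + B x l i * pd (fun y => A y j k) l x
      + B x l j * pd (fun y => A y k i) l x
      + B x l k * pd (fun y => A y i j) l x)

/-- The weight-homogeneous potential `V = q₁^{4/α} f(q₂/q₁)` (real power, for `q₁ > 0`). -/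
def Vw (α : ℝ) (f : ℝ → ℝ) (x : Fin 4 → ℝ) : ℝ := (x 0) ^ ((4 : ℝ) / α) * f (x 1 / x 0)

/-- The Hamiltonian `H = (p₁² + p₂²)/2 + V`. -/
def Hw (α : ℝ) (f : ℝ → ℝ) (x : Fin 4 → ℝ) : ℝ := ((x 2) ^ 2 + (x 3) ^ 2) / 2 + Vw α f x

/-- The Hamiltonian vector field `X = (p₁, p₂, −∂V/∂q₁, −∂V/∂q₂)`. -/
def Xw (α : ℝ) (f : ℝ → ℝ) (x : Fin 4 → ℝ) : Fin 4 → ℝ :=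
  ![x 2, x 3, -(pd (Vw α f) 0 x), -(pd (Vw α f) 1 x)]

/-- The invariant bivector `P̃` associated with the weight-homogeneous potential. -/
def Ptw (α : ℝ) (f : ℝ → ℝ) (x : Fin 4 → ℝ) : Matrix (Fin 4) (Fin 4) ℝ :=
  let q1 := x 0; let q2 := x 1; let p1 := x 2; let p2 := x 3
  let V1 := pd (Vw α f) 0 x
  let V2 := pd (Vw α f) 1 x
  let v := Vw α f x
  let e12 := α * (p1 * q2 - p2 * q1)
  let e13 := p1 ^ 2 - p2 ^ 2 - α * q2 * V2 + 2 * v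
  let e14 := 2 * p1 * p2 + α * q1 * V2
  let e23 := 2 * p1 * p2 + α * q2 * V1
  let e24 := -e13
  let e34 := 2 * p1 * V2 - 2 * p2 * V1
  !![0, e12, e13, e14;
     -(e12), 0, e23, e24;
     -(e13), -(e23), 0, e34;
     -(e14), -(e24), -(e34), 0]

/-- The bivector `P'' = α·H·P + P̃`. -/
def Pw'' (α : ℝ) (f : ℝ → ℝ) (x : Fin 4 → ℝ) : Matrix (Fin 4) (Fin 4) ℝ :=
  Matrix.of fun i j => α * Hw α f x * Pcan i j + Ptw α f x i j

open Topology Filter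

namespace S9
def pr (k : Fin 4) : (Fin 4 → ℝ) →L[ℝ] ℝ := ContinuousLinearMap.proj k

@[simp] lemma pr_apply (k : Fin 4) (v : Fin 4 → ℝ) : pr k v = v k := rfl

lemma hasFDerivAt_coord (k : Fin 4) (x : Fin 4 → ℝ) :
    HasFDerivAt (fun y : Fin 4 → ℝ => y k) (pr k) x :=
  (pr k).hasFDerivAt

def Aa (e : ℝ) (g : ℝ → ℝ) (x : Fin 4 → ℝ) : ℝ := (x 0) ^ e * g (x 1 / x 0)

lemma hasFDerivAt_Aa (e : ℝ) {g g' : ℝ → ℝ} (hg : ∀ t, HasDerivAt g (g' t) t)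
    {x : Fin 4 → ℝ} (hx : 0 < x 0) :
    HasFDerivAt (Aa e g)
      ((Aa (e-1) (fun t => e * g t - t * g' t) x) • pr 0 + (Aa (e-1) g' x) • pr 1) x := by
  have hx0 : x 0 ≠ 0 := ne_of_gt hx
  have h0 := hasFDerivAt_coord 0 x
  have h1 := hasFDerivAt_coord 1 x
  have hpow : HasFDerivAt (fun y : Fin 4 → ℝ => (y 0) ^ e)
      ((e * (x 0) ^ (e - 1)) • pr 0) x := by
    have := (Real.hasDerivAt_rpow_const (p := e) (Or.inl hx0)).comp_hasFDerivAt x h0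
    exact this
  have hinv : HasFDerivAt (fun y : Fin 4 → ℝ => (y 0)⁻¹)
      ((-((x 0) ^ 2)⁻¹) • pr 0) x :=
    (hasDerivAt_inv hx0).comp_hasFDerivAt x h0
  have hdiv : HasFDerivAt (fun y : Fin 4 → ℝ => y 1 / y 0)
      ((x 1) • ((-((x 0) ^ 2)⁻¹) • pr 0) + ((x 0)⁻¹) • pr 1) x := by
    simp only [div_eq_mul_inv]
    exact h1.mul hinv
  have hgc : HasFDerivAt (fun y : Fin 4 → ℝ => g (y 1 / y 0))
      ((g' (x 1 / x 0)) • ((x 1) • ((-((x 0) ^ 2)⁻¹) • pr 0) + ((x 0)⁻¹) • pr 1)) x :=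
    (hg _).comp_hasFDerivAt x hdiv
  have hmul := hpow.mul hgc
  have he : (x 0) ^ e = (x 0) ^ (e - 1) * x 0 := by
    rw [← Real.rpow_add_one hx0 (e - 1)]; ring_nf
  refine hmul.congr_fderiv ?_
  symm
  ext v
  simp only [Aa, ContinuousLinearMap.add_apply, ContinuousLinearMap.coe_smul',
    Pi.smul_apply, pr_apply, smul_eq_mul, ContinuousLinearMap.coe_sub']
  rw [he]
  field_simp
  ring

/-! ### The `W` functions: `V` and its partial derivatives. -/

def W (α : ℝ) (f : ℝ → ℝ) : (Fin 4 → ℝ) → ℝ := Aa (4/α) f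

def W1 (α : ℝ) (f : ℝ → ℝ) : (Fin 4 → ℝ) → ℝ :=
  Aa (4/α - 1) (fun t => (4/α) * f t - t * deriv f t)

def W2 (α : ℝ) (f : ℝ → ℝ) : (Fin 4 → ℝ) → ℝ := Aa (4/α - 1) (deriv f)

def W11 (α : ℝ) (f : ℝ → ℝ) : (Fin 4 → ℝ) → ℝ :=
  Aa (4/α - 1 - 1) (fun t => (4/α - 1) * ((4/α) * f t - t * deriv f t)
      - t * ((4/α - 1) * deriv f t - t * deriv (deriv f) t))

def W12 (α : ℝ) (f : ℝ → ℝ) : (Fin 4 → ℝ) → ℝ :=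
  Aa (4/α - 1 - 1) (fun t => (4/α - 1) * deriv f t - t * deriv (deriv f) t)

def W22 (α : ℝ) (f : ℝ → ℝ) : (Fin 4 → ℝ) → ℝ :=
  Aa (4/α - 1 - 1) (deriv (deriv f))

variable {α : ℝ} {f : ℝ → ℝ} {x : Fin 4 → ℝ}

lemma hdf (hf : ContDiff ℝ (⊤ : ℕ∞) f) : ∀ t, HasDerivAt f (deriv f t) t :=
  fun t => ((hf.differentiable (by simp)) t).hasDerivAt

lemma hdf1 (hf : ContDiff ℝ (⊤ : ℕ∞) f) : ∀ t, HasDerivAt (deriv f) (deriv (deriv f) t) t := by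
  have h := (contDiff_infty_iff_deriv.mp (hf.of_le (by simp))).2
  exact fun t => ((h.differentiable (by simp)) t).hasDerivAt

lemma hasW (hf : ContDiff ℝ (⊤ : ℕ∞) f) (hx : 0 < x 0) :
    HasFDerivAt (W α f) (W1 α f x • pr 0 + W2 α f x • pr 1) x :=
  hasFDerivAt_Aa _ (hdf hf) hx

lemma hasW1 (hf : ContDiff ℝ (⊤ : ℕ∞) f) (hx : 0 < x 0) :
    HasFDerivAt (W1 α f) (W11 α f x • pr 0 + W12 α f x • pr 1) x := by
  have hg : ∀ t, HasDerivAt (fun t => (4/α) * f t - t * deriv f t)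
      ((4/α - 1) * deriv f t - t * deriv (deriv f) t) t := by
    intro t
    have h := ((hdf hf t).const_mul ((4:ℝ)/α)).sub ((hasDerivAt_id t).mul (hdf1 hf t))
    refine h.congr_deriv ?_; simp only [id_eq]; ring
  exact hasFDerivAt_Aa _ hg hx

lemma hasW2 (hf : ContDiff ℝ (⊤ : ℕ∞) f) (hx : 0 < x 0) :
    HasFDerivAt (W2 α f) (W12 α f x • pr 0 + W22 α f x • pr 1) x :=
  hasFDerivAt_Aa _ (hdf1 hf) hx

lemma pdVw0 (hf : ContDiff ℝ (⊤ : ℕ∞) f) (hx : 0 < x 0) : pd (Vw α f) 0 x = W1 α f x := by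
  have h : HasFDerivAt (Vw α f) (W1 α f x • pr 0 + W2 α f x • pr 1) x := hasW hf hx
  rw [pd, h.fderiv]
  simp [Pi.single_apply]

lemma pdVw1 (hf : ContDiff ℝ (⊤ : ℕ∞) f) (hx : 0 < x 0) : pd (Vw α f) 1 x = W2 α f x := by
  have h : HasFDerivAt (Vw α f) (W1 α f x • pr 0 + W2 α f x • pr 1) x := hasW hf hx
  rw [pd, h.fderiv]
  simp [Pi.single_apply]

end S9

namespace T
variable {α : ℝ} {f : ℝ → ℝ} {x : Fin 4 → ℝ}

lemma pd_eq {F : (Fin 4 → ℝ) → ℝ} {L : (Fin 4 → ℝ) →L[ℝ] ℝ} {x : Fin 4 → ℝ}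
    (h : HasFDerivAt F L x) (k : Fin 4) : pd F k x = L (Pi.single k 1) := by
  unfold pd; rw [h.fderiv]

open S9

lemma entry12 (hf : ContDiff ℝ (⊤ : ℕ∞) f) (hx : 0 < x 0) :
    Pw'' α f x 1 2 = 2 * (x 2 * x 3) + α * (x 1 * W1 α f x) := by
  simp [Pw'', Ptw, Pcan, pdVw0 hf hx]
  try ring

lemma pdP12 (hf : ContDiff ℝ (⊤ : ℕ∞) f) (hx : 0 < x 0) (l : Fin 4) :
    pd (fun y => Pw'' α f y 1 2) l x
      = ![α * (x 1 * W11 α f x), α * (W1 α f x + x 1 * W12 α f x), 2 * x 3, 2 * x 2] l := by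
  have hnb : {y : Fin 4 → ℝ | 0 < y 0} ∈ 𝓝 x :=
    (isOpen_lt continuous_const (continuous_apply 0)).mem_nhds hx
  have hev : (fun y => Pw'' α f y 1 2) =ᶠ[𝓝 x]
      fun y => 2 * (y 2 * y 3) + α * (y 1 * W1 α f y) := by
    filter_upwards [hnb] with y hy
    exact entry12 hf hy
  have hc1 := hasFDerivAt_coord 1 x
  have hc2 := hasFDerivAt_coord 2 x
  have hc3 := hasFDerivAt_coord 3 x
  have hD := (((hc2.mul hc3).const_mul (2:ℝ)).add
    ((hc1.mul (hasW1 hf hx)).const_mul α)).congr_of_eventuallyEq hev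
  rw [pd_eq hD]
  fin_cases l <;> simp [Pi.single_apply] <;> ring

end T

namespace T2
open S9 T
variable {α : ℝ} {f : ℝ → ℝ} {x : Fin 4 → ℝ}

lemma pd_neg (F : (Fin 4 → ℝ) → ℝ) (k : Fin 4) (x : Fin 4 → ℝ) :
    pd (fun y => -(F y)) k x = -(pd F k x) := by
  unfold pd; rw [fderiv_fun_neg]; simp

lemma entry01 : Pw'' α f x 0 1 = α * (x 2 * x 1 - x 3 * x 0) := by
  simp [Pw'', Ptw, Pcan]
  try ring

lemma entry02 (hf : ContDiff ℝ (⊤ : ℕ∞) f) (hx : 0 < x 0) :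
    Pw'' α f x 0 2 = α/2 * (x 2 * x 2 + x 3 * x 3) + α * W α f x
      + (x 2 * x 2 - x 3 * x 3 - α * (x 1 * W2 α f x) + 2 * W α f x) := by
  simp [Pw'', Ptw, Pcan, Hw, pdVw1 hf hx, Vw, W, Aa]
  try ring

lemma entry03 (hf : ContDiff ℝ (⊤ : ℕ∞) f) (hx : 0 < x 0) :
    Pw'' α f x 0 3 = 2 * (x 2 * x 3) + α * (x 0 * W2 α f x) := by
  simp [Pw'', Ptw, Pcan, pdVw1 hf hx]
  try ring

lemma entry13 (hf : ContDiff ℝ (⊤ : ℕ∞) f) (hx : 0 < x 0) :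
    Pw'' α f x 1 3 = α/2 * (x 2 * x 2 + x 3 * x 3) + α * W α f x
      - (x 2 * x 2 - x 3 * x 3 - α * (x 1 * W2 α f x) + 2 * W α f x) := by
  simp [Pw'', Ptw, Pcan, Hw, pdVw1 hf hx, Vw, W, Aa]
  try ring

lemma entry23 (hf : ContDiff ℝ (⊤ : ℕ∞) f) (hx : 0 < x 0) :
    Pw'' α f x 2 3 = 2 * (x 2 * W2 α f x) - 2 * (x 3 * W1 α f x) := by
  simp [Pw'', Ptw, Pcan, pdVw0 hf hx, pdVw1 hf hx]
  try ring

lemma pdP01 (l : Fin 4) :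
    pd (fun y => Pw'' α f y 0 1) l x
      = ![-(α * x 3), α * x 2, α * x 1, -(α * x 0)] l := by
  have hev : (fun y => Pw'' α f y 0 1) =ᶠ[𝓝 x]
      fun y => α * (y 2 * y 1 - y 3 * y 0) :=
    Filter.Eventually.of_forall fun y => entry01
  have hc0 := hasFDerivAt_coord 0 x
  have hc1 := hasFDerivAt_coord 1 x
  have hc2 := hasFDerivAt_coord 2 x
  have hc3 := hasFDerivAt_coord 3 x
  have hD := (((hc2.mul hc1).sub (hc3.mul hc0)).const_mul α).congr_of_eventuallyEq hev
  rw [pd_eq hD]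
  fin_cases l <;> simp [Pi.single_apply] <;> ring

lemma pdP02 (hf : ContDiff ℝ (⊤ : ℕ∞) f) (hx : 0 < x 0) (l : Fin 4) :
    pd (fun y => Pw'' α f y 0 2) l x
      = ![α * W1 α f x + (2 * W1 α f x - α * (x 1 * W12 α f x)),
          α * W2 α f x + (2 * W2 α f x - α * (W2 α f x + x 1 * W22 α f x)),
          α * x 2 + 2 * x 2, α * x 3 - 2 * x 3] l := by
  have hnb : {y : Fin 4 → ℝ | 0 < y 0} ∈ 𝓝 x :=
    (isOpen_lt continuous_const (continuous_apply 0)).mem_nhds hx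
  have hev : (fun y => Pw'' α f y 0 2) =ᶠ[𝓝 x]
      fun y => α/2 * (y 2 * y 2 + y 3 * y 3) + α * W α f y
        + (y 2 * y 2 - y 3 * y 3 - α * (y 1 * W2 α f y) + 2 * W α f y) := by
    filter_upwards [hnb] with y hy
    exact entry02 hf hy
  have hc1 := hasFDerivAt_coord 1 x
  have hc2 := hasFDerivAt_coord 2 x
  have hc3 := hasFDerivAt_coord 3 x
  have hD := (((((hc2.mul hc2).add (hc3.mul hc3)).const_mul (α/2)).add
      ((hasW hf hx).const_mul α)).add
    (((((hc2.mul hc2).sub (hc3.mul hc3)).sub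
      ((hc1.mul (hasW2 hf hx)).const_mul α)).add
      ((hasW hf hx).const_mul 2)))).congr_of_eventuallyEq hev
  rw [pd_eq hD]
  fin_cases l <;> simp [Pi.single_apply] <;> ring

lemma pdP03 (hf : ContDiff ℝ (⊤ : ℕ∞) f) (hx : 0 < x 0) (l : Fin 4) :
    pd (fun y => Pw'' α f y 0 3) l x
      = ![α * (W2 α f x + x 0 * W12 α f x), α * (x 0 * W22 α f x), 2 * x 3, 2 * x 2] l := by
  have hnb : {y : Fin 4 → ℝ | 0 < y 0} ∈ 𝓝 x :=
    (isOpen_lt continuous_const (continuous_apply 0)).mem_nhds hx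
  have hev : (fun y => Pw'' α f y 0 3) =ᶠ[𝓝 x]
      fun y => 2 * (y 2 * y 3) + α * (y 0 * W2 α f y) := by
    filter_upwards [hnb] with y hy
    exact entry03 hf hy
  have hc0 := hasFDerivAt_coord 0 x
  have hc2 := hasFDerivAt_coord 2 x
  have hc3 := hasFDerivAt_coord 3 x
  have hD := (((hc2.mul hc3).const_mul (2:ℝ)).add
    ((hc0.mul (hasW2 hf hx)).const_mul α)).congr_of_eventuallyEq hev
  rw [pd_eq hD]
  fin_cases l <;> simp [Pi.single_apply] <;> ring

lemma pdP13 (hf : ContDiff ℝ (⊤ : ℕ∞) f) (hx : 0 < x 0) (l : Fin 4) :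
    pd (fun y => Pw'' α f y 1 3) l x
      = ![α * W1 α f x - (2 * W1 α f x - α * (x 1 * W12 α f x)),
          α * W2 α f x - (2 * W2 α f x - α * (W2 α f x + x 1 * W22 α f x)),
          α * x 2 - 2 * x 2, α * x 3 + 2 * x 3] l := by
  have hnb : {y : Fin 4 → ℝ | 0 < y 0} ∈ 𝓝 x :=
    (isOpen_lt continuous_const (continuous_apply 0)).mem_nhds hx
  have hev : (fun y => Pw'' α f y 1 3) =ᶠ[𝓝 x]
      fun y => α/2 * (y 2 * y 2 + y 3 * y 3) + α * W α f y
        - (y 2 * y 2 - y 3 * y 3 - α * (y 1 * W2 α f y) + 2 * W α f y) := by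
    filter_upwards [hnb] with y hy
    exact entry13 hf hy
  have hc1 := hasFDerivAt_coord 1 x
  have hc2 := hasFDerivAt_coord 2 x
  have hc3 := hasFDerivAt_coord 3 x
  have hD := (((((hc2.mul hc2).add (hc3.mul hc3)).const_mul (α/2)).add
      ((hasW hf hx).const_mul α)).sub
    (((((hc2.mul hc2).sub (hc3.mul hc3)).sub
      ((hc1.mul (hasW2 hf hx)).const_mul α)).add
      ((hasW hf hx).const_mul 2)))).congr_of_eventuallyEq hev
  rw [pd_eq hD]
  fin_cases l <;> simp [Pi.single_apply] <;> ring

lemma pdP23 (hf : ContDiff ℝ (⊤ : ℕ∞) f) (hx : 0 < x 0) (l : Fin 4) :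
    pd (fun y => Pw'' α f y 2 3) l x
      = ![2 * (x 2 * W12 α f x) - 2 * (x 3 * W11 α f x),
          2 * (x 2 * W22 α f x) - 2 * (x 3 * W12 α f x),
          2 * W2 α f x, -(2 * W1 α f x)] l := by
  have hnb : {y : Fin 4 → ℝ | 0 < y 0} ∈ 𝓝 x :=
    (isOpen_lt continuous_const (continuous_apply 0)).mem_nhds hx
  have hev : (fun y => Pw'' α f y 2 3) =ᶠ[𝓝 x]
      fun y => 2 * (y 2 * W2 α f y) - 2 * (y 3 * W1 α f y) := by
    filter_upwards [hnb] with y hy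
    exact entry23 hf hy
  have hc2 := hasFDerivAt_coord 2 x
  have hc3 := hasFDerivAt_coord 3 x
  have hD := (((hc2.mul (hasW2 hf hx)).const_mul (2:ℝ)).sub
    ((hc3.mul (hasW1 hf hx)).const_mul (2:ℝ))).congr_of_eventuallyEq hev
  rw [pd_eq hD]
  fin_cases l <;> simp [Pi.single_apply] <;> ring

end T2

namespace T3
open S9 T T2
variable {α : ℝ} {f : ℝ → ℝ} {x : Fin 4 → ℝ}

def Emat (α : ℝ) (f : ℝ → ℝ) (x : Fin 4 → ℝ) : Matrix (Fin 4) (Fin 4) ℝ :=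
  let v01 := α * (x 2 * x 1 - x 3 * x 0)
  let v02 := α/2 * (x 2 * x 2 + x 3 * x 3) + α * W α f x
      + (x 2 * x 2 - x 3 * x 3 - α * (x 1 * W2 α f x) + 2 * W α f x)
  let v03 := 2 * (x 2 * x 3) + α * (x 0 * W2 α f x)
  let v12 := 2 * (x 2 * x 3) + α * (x 1 * W1 α f x)
  let v13 := α/2 * (x 2 * x 2 + x 3 * x 3) + α * W α f x
      - (x 2 * x 2 - x 3 * x 3 - α * (x 1 * W2 α f x) + 2 * W α f x)
  let v23 := 2 * (x 2 * W2 α f x) - 2 * (x 3 * W1 α f x)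
  !![0, v01, v02, v03;
     -v01, 0, v12, v13;
     -v02, -v12, 0, v23;
     -v03, -v13, -v23, 0]

lemma Pval (hf : ContDiff ℝ (⊤ : ℕ∞) f) (hx : 0 < x 0) (a b : Fin 4) :
    Pw'' α f x a b = Emat α f x a b := by
  fin_cases a <;> fin_cases b <;>
    simp [Pw'', Ptw, Pcan, Emat, Hw, pdVw0 hf hx, pdVw1 hf hx, Vw, W, Aa,
      Matrix.vecHead, Matrix.vecTail] <;>
    try ring

lemma jac012 (hα : α ≠ 0) (hf : ContDiff ℝ (⊤ : ℕ∞) f) (hx : 0 < x 0) :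
    jac (Pw'' α f) 0 1 2 x = 0 := by
  have hx0 : x 0 ≠ 0 := ne_of_gt hx
  have hsk : (fun y => Pw'' α f y 2 0) = fun y => -(Pw'' α f y 0 2) := by
    funext y; simp [Pw'', Ptw, Pcan]; try ring
  simp only [jac, Fin.sum_univ_four, hsk, pd_neg,
    pdP12 hf hx, pdP02 hf hx, pdP01 (α:=α) (f:=f) (x:=x), Pval hf hx]
  simp [Emat, Matrix.vecHead, Matrix.vecTail]
  simp only [W, W1, W2, W11, W12, W22, Aa]
  have e1 : (x 0) ^ ((4:ℝ)/α) = (x 0)^((4:ℝ)/α - 1) * x 0 := by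
    rw [← Real.rpow_add_one hx0]; ring_nf
  have e2 : (x 0) ^ ((4:ℝ)/α - 1) = (x 0)^((4:ℝ)/α - 1 - 1) * x 0 := by
    rw [← Real.rpow_add_one hx0]; ring_nf
  rw [e1, e2]
  field_simp
  ring

end T3

namespace T4
open S9 T T2 T3
variable {α : ℝ} {f : ℝ → ℝ} {x : Fin 4 → ℝ}

lemma jac013 (hα : α ≠ 0) (hf : ContDiff ℝ (⊤ : ℕ∞) f) (hx : 0 < x 0) :
    jac (Pw'' α f) 0 1 3 x = 0 := by
  have hx0 : x 0 ≠ 0 := ne_of_gt hx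
  have hsk : (fun y => Pw'' α f y 3 0) = fun y => -(Pw'' α f y 0 3) := by
    funext y; simp [Pw'', Ptw, Pcan]; try ring
  simp only [jac, Fin.sum_univ_four, hsk, pd_neg,
    pdP13 hf hx, pdP03 hf hx, pdP01 (α:=α) (f:=f) (x:=x), Pval hf hx]
  simp [Emat, Matrix.vecHead, Matrix.vecTail]
  simp only [W, W1, W2, W11, W12, W22, Aa]
  have e1 : (x 0) ^ ((4:ℝ)/α) = (x 0)^((4:ℝ)/α - 1) * x 0 := by
    rw [← Real.rpow_add_one hx0]; ring_nf
  have e2 : (x 0) ^ ((4:ℝ)/α - 1) = (x 0)^((4:ℝ)/α - 1 - 1) * x 0 := by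
    rw [← Real.rpow_add_one hx0]; ring_nf
  rw [e1, e2]
  field_simp
  ring

lemma jac023 (hα : α ≠ 0) (hf : ContDiff ℝ (⊤ : ℕ∞) f) (hx : 0 < x 0) :
    jac (Pw'' α f) 0 2 3 x = 0 := by
  have hx0 : x 0 ≠ 0 := ne_of_gt hx
  have hsk : (fun y => Pw'' α f y 3 0) = fun y => -(Pw'' α f y 0 3) := by
    funext y; simp [Pw'', Ptw, Pcan]; try ring
  simp only [jac, Fin.sum_univ_four, hsk, pd_neg,
    pdP23 hf hx, pdP03 hf hx, pdP02 hf hx, Pval hf hx]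
  simp [Emat, Matrix.vecHead, Matrix.vecTail]
  simp only [W, W1, W2, W11, W12, W22, Aa]
  have e1 : (x 0) ^ ((4:ℝ)/α) = (x 0)^((4:ℝ)/α - 1) * x 0 := by
    rw [← Real.rpow_add_one hx0]; ring_nf
  have e2 : (x 0) ^ ((4:ℝ)/α - 1) = (x 0)^((4:ℝ)/α - 1 - 1) * x 0 := by
    rw [← Real.rpow_add_one hx0]; ring_nf
  rw [e1, e2]
  field_simp
  ring

lemma jac123 (hα : α ≠ 0) (hf : ContDiff ℝ (⊤ : ℕ∞) f) (hx : 0 < x 0) :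
    jac (Pw'' α f) 1 2 3 x = 0 := by
  have hx0 : x 0 ≠ 0 := ne_of_gt hx
  have hsk : (fun y => Pw'' α f y 3 1) = fun y => -(Pw'' α f y 1 3) := by
    funext y; simp [Pw'', Ptw, Pcan]; try ring
  simp only [jac, Fin.sum_univ_four, hsk, pd_neg,
    pdP23 hf hx, pdP13 hf hx, pdP12 hf hx, Pval hf hx]
  simp [Emat, Matrix.vecHead, Matrix.vecTail]
  simp only [W, W1, W2, W11, W12, W22, Aa]
  have e1 : (x 0) ^ ((4:ℝ)/α) = (x 0)^((4:ℝ)/α - 1) * x 0 := by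
    rw [← Real.rpow_add_one hx0]; ring_nf
  have e2 : (x 0) ^ ((4:ℝ)/α - 1) = (x 0)^((4:ℝ)/α - 1 - 1) * x 0 := by
    rw [← Real.rpow_add_one hx0]; ring_nf
  rw [e1, e2]
  field_simp
  ring

end T4

namespace T5
open S9 T T2 T3 T4

lemma jac_swap12 (A : (Fin 4 → ℝ) → Matrix (Fin 4) (Fin 4) ℝ)
    (hA : ∀ y a b, A y b a = -(A y a b)) (i j k : Fin 4) (x : Fin 4 → ℝ) :
    jac A j i k x = -(jac A i j k x) := by
  have hpd : ∀ (a b : Fin 4) (l : Fin 4),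
      pd (fun y => A y b a) l x = -(pd (fun y => A y a b) l x) := fun a b l => by
    rw [show (fun y => A y b a) = fun y => -(A y a b) from funext fun y => hA y a b,
      pd_neg]
  unfold jac
  rw [← Finset.sum_neg_distrib]
  refine Finset.sum_congr rfl fun l _ => ?_
  rw [hpd k i l, hpd j k l, hpd i j l]
  ring

lemma jac_swap23 (A : (Fin 4 → ℝ) → Matrix (Fin 4) (Fin 4) ℝ)
    (hA : ∀ y a b, A y b a = -(A y a b)) (i j k : Fin 4) (x : Fin 4 → ℝ) :
    jac A i k j x = -(jac A i j k x) := by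
  have hpd : ∀ (a b : Fin 4) (l : Fin 4),
      pd (fun y => A y b a) l x = -(pd (fun y => A y a b) l x) := fun a b l => by
    rw [show (fun y => A y b a) = fun y => -(A y a b) from funext fun y => hA y a b,
      pd_neg]
  unfold jac
  rw [← Finset.sum_neg_distrib]
  refine Finset.sum_congr rfl fun l _ => ?_
  rw [hpd j k l, hpd i j l, hpd k i l]
  ring


lemma Pskew (α : ℝ) (f : ℝ → ℝ) :
    ∀ (y : Fin 4 → ℝ) (a b : Fin 4), Pw'' α f y b a = -(Pw'' α f y a b) := by
  intro y a b
  fin_cases a <;> fin_cases b <;>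
    (simp [Pw'', Ptw, Pcan, Matrix.vecHead, Matrix.vecTail]; try ring)


lemma dispatch (J : Fin 4 → Fin 4 → Fin 4 → ℝ)
    (hs1 : ∀ i j k, J j i k = -(J i j k))
    (hs2 : ∀ i j k, J i k j = -(J i j k))
    (h012 : J 0 1 2 = 0) (h013 : J 0 1 3 = 0)
    (h023 : J 0 2 3 = 0) (h123 : J 1 2 3 = 0) :
    ∀ i j k, J i j k = 0 := by
  have hd1 : ∀ i k : Fin 4, J i i k = 0 := by
    intro i k; have h := hs1 i i k; linarith
  have hd2 : ∀ i j : Fin 4, J i j j = 0 := by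
    intro i j; have h := hs2 i j j; linarith
  have hd3 : ∀ i j : Fin 4, J i j i = 0 := by
    intro i j; have h := hs1 j i i; have h' := hd2 j i; linarith
  have z021 : J 0 2 1 = 0 := by have := hs2 0 1 2; linarith
  have z102 : J 1 0 2 = 0 := by have := hs1 0 1 2; linarith
  have z120 : J 1 2 0 = 0 := by have := hs2 1 0 2; linarith
  have z201 : J 2 0 1 = 0 := by have := hs1 0 2 1; linarith
  have z210 : J 2 1 0 = 0 := by have := hs1 1 2 0; linarith
  have z031 : J 0 3 1 = 0 := by have := hs2 0 1 3; linarith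
  have z103 : J 1 0 3 = 0 := by have := hs1 0 1 3; linarith
  have z130 : J 1 3 0 = 0 := by have := hs2 1 0 3; linarith
  have z301 : J 3 0 1 = 0 := by have := hs1 0 3 1; linarith
  have z310 : J 3 1 0 = 0 := by have := hs1 1 3 0; linarith
  have z032 : J 0 3 2 = 0 := by have := hs2 0 2 3; linarith
  have z203 : J 2 0 3 = 0 := by have := hs1 0 2 3; linarith
  have z230 : J 2 3 0 = 0 := by have := hs2 2 0 3; linarith
  have z302 : J 3 0 2 = 0 := by have := hs1 0 3 2; linarith
  have z320 : J 3 2 0 = 0 := by have := hs1 2 3 0; linarith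
  have z132 : J 1 3 2 = 0 := by have := hs2 1 2 3; linarith
  have z213 : J 2 1 3 = 0 := by have := hs1 1 2 3; linarith
  have z231 : J 2 3 1 = 0 := by have := hs2 2 1 3; linarith
  have z312 : J 3 1 2 = 0 := by have := hs1 1 3 2; linarith
  have z321 : J 3 2 1 = 0 := by have := hs1 2 3 1; linarith
  intro i j k
  fin_cases i <;> fin_cases j <;> fin_cases k <;>
    first
      | exact hd1 _ _
      | exact hd2 _ _
      | exact hd3 _ _
      | assumption

end T5

open S9 T T2 T3 T4 T5

/-- for `V = q₁^{4/α} f(q₂/q₁)`, the bivector `P'' = α·H·P + P̃`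
satisfies the Jacobi identity on `{q₁ > 0}`. -/
theorem statement9 (α : ℝ) (hα : α ≠ 0) (f : ℝ → ℝ) (hf : ContDiff ℝ (⊤ : ℕ∞) f) :
    ∀ x : Fin 4 → ℝ, 0 < x 0 →
      ∀ i j k : Fin 4, jac (Pw'' α f) i j k x = 0 := by
  intro x hx
  have hA := Pskew α f
  exact dispatch (fun i j k => jac (Pw'' α f) i j k x)
    (fun i j k => jac_swap12 (Pw'' α f) hA i j k x)
    (fun i j k => jac_swap23 (Pw'' α f) hA i j k x)
    (jac012 hα hf hx) (jac013 hα hf hx) (jac023 hα hf hx) (jac123 hα hf hx)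


end
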